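/- arXiv:2309.11919 — 4 statements merged into one kernel-verified Lean document; each statement's English description precedes it below -/
import Mathlib

section
/- Assume an exponential trichotomy with exponents a < 0 < b and projectors π₋, π₀, π₊ bounded by N. Let 0 < η < min{−a, b} and s ∈ ℝ. Then a vector y₀ ∈ ℝⁿ lies in the center subspace E₀(s) if and only if the solution t ↦ U(t,s)y₀ of y' = A(t)y belongs to BC_s^η, i.e. sup_t e^{−η|t−s|}‖U(t,s)y₀‖ < ∞. -/
/-!
If `y₀ = π₀(s) x`, the center bound `‖U(t,s)π₀(s)‖ ≤ C e^{η|t-s|}` gives the weighted bound at once.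
Conversely, write `π₊(s) y₀ = U(s,t) π₊(t) U(t,s) y₀` for `t ≥ s`: the factor `U(s,t)π₊(t)` decays like
`e^{-b(t-s)}` while `U(t,s) y₀` grows at most like `e^{η(t-s)}`, and `η < b` forces `π₊(s) y₀ = 0`.
Going backwards in time with `η < -a` kills `π₋(s) y₀` in the same way, so `y₀ = π₀(s) y₀`.
-/

open Real

lemma Real.exp_neg_mul_le_iff {x r C : ℝ} : exp (-x) * r ≤ C ↔ r ≤ C * exp x := by
  rw [exp_neg, inv_mul_le_iff₀ (exp_pos x), mul_comm]

lemma eq_zero_of_forall_norm_le_mul_exp {E : Type*} [NormedAddCommGroup E] {v : E} {K c : ℝ}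
    (hc : c < 0) (h : ∀ u : ℝ, 0 ≤ u → ‖v‖ ≤ K * exp (c * u)) : v = 0 := by
  have hlim : Filter.Tendsto (fun u : ℝ => K * exp (c * u)) Filter.atTop (nhds 0) := by
    simpa using (tendsto_exp_atBot.comp (Filter.tendsto_id.const_mul_atTop_of_neg hc)).const_mul K
  have hle : ‖v‖ ≤ 0 :=
    ge_of_tendsto hlim (Filter.eventually_ge_atTop 0 |>.mono h)
  exact norm_le_zero_iff.mp hle

section EvolutionFamily

variable {E : Type*} [NormedAddCommGroup E] [NormedSpace ℝ E]
  {U : ℝ → ℝ → E →L[ℝ] E} {P : ℝ → E →L[ℝ] E} {s : ℝ}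

lemma apply_eq_comp_apply_evolution (hcocycle : ∀ t r s : ℝ, (U t r).comp (U r s) = U t s)
    (hid : ∀ s : ℝ, U s s = ContinuousLinearMap.id ℝ E)
    (hcomm : ∀ t : ℝ, (U t s).comp (P s) = (P t).comp (U t s)) (t : ℝ) (y : E) :
    P s y = (U s t).comp (P t) (U t s y) := by
  have hback : U s t (U t s (P s y)) = P s y := by
    simpa [hid s] using congrArg (· (P s y)) (hcocycle s t s)
  have hswap : U t s (P s y) = P t (U t s y) := congrArg (· y) (hcomm t)
  rw [ContinuousLinearMap.comp_apply, ← hswap, hback]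

lemma apply_eq_zero_of_growth_lt_decay (hcocycle : ∀ t r s : ℝ, (U t r).comp (U r s) = U t s)
    (hid : ∀ s : ℝ, U s s = ContinuousLinearMap.id ℝ E)
    (hcomm : ∀ t : ℝ, (U t s).comp (P s) = (P t).comp (U t s)) {y : E} {C C' η β : ℝ}
    (hηβ : η < β) (hgrowth : ∀ t : ℝ, ‖U t s y‖ ≤ C' * exp (η * |t - s|))
    (hdecay : ∀ u : ℝ, 0 ≤ u → ∃ t : ℝ, |t - s| = u ∧ ‖(U s t).comp (P t)‖ ≤ C * exp (-β * u)) :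
    P s y = 0 := by
  refine eq_zero_of_forall_norm_le_mul_exp (K := C * C') (sub_neg.mpr hηβ) fun u hu => ?_
  obtain ⟨t, hts, hdec⟩ := hdecay u hu
  calc ‖P s y‖ = ‖(U s t).comp (P t) (U t s y)‖ := by
        rw [apply_eq_comp_apply_evolution hcocycle hid hcomm]
    _ ≤ ‖(U s t).comp (P t)‖ * ‖U t s y‖ := ContinuousLinearMap.le_opNorm _ _
    _ ≤ (C * exp (-β * u)) * (C' * exp (η * u)) :=
        mul_le_mul hdec (hts ▸ hgrowth t) (norm_nonneg _) ((norm_nonneg _).trans hdec)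
    _ = C * C' * exp ((η - β) * u) := by
        rw [show (η - β) * u = -β * u + η * u by ring, exp_add]; ring

end EvolutionFamily

theorem stmt_6_general {n : ℕ}
    (U : ℝ → ℝ → ((Fin n → ℝ) →L[ℝ] (Fin n → ℝ)))
    (πm π0 πp : ℝ → ((Fin n → ℝ) →L[ℝ] (Fin n → ℝ)))
    (hcocycle : ∀ t r s : ℝ, (U t r).comp (U r s) = U t s)
    (hid : ∀ s : ℝ, U s s = ContinuousLinearMap.id ℝ (Fin n → ℝ))
    (hsum : ∀ t : ℝ, πm t + π0 t + πp t = ContinuousLinearMap.id ℝ (Fin n → ℝ))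
    (hcomm : ∀ t s : ℝ, (U t s).comp (πm s) = (πm t).comp (U t s) ∧
      (U t s).comp (π0 s) = (π0 t).comp (U t s) ∧ (U t s).comp (πp s) = (πp t).comp (U t s))
    (a b : ℝ)
    (htri : ∀ ε : ℝ, 0 < ε → ∃ C : ℝ, 0 < C ∧
      (∀ t s : ℝ, s ≤ t → ‖(U t s).comp (πm s)‖ ≤ C * Real.exp (a * (t - s))) ∧
      (∀ t s : ℝ, ‖(U t s).comp (π0 s)‖ ≤ C * Real.exp (ε * |t - s|)) ∧
      (∀ t s : ℝ, t ≤ s → ‖(U t s).comp (πp s)‖ ≤ C * Real.exp (b * (t - s))))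
    (η : ℝ) (hη0 : 0 < η) (hηa : η < -a) (hηb : η < b)
    (s : ℝ) (y₀ : Fin n → ℝ) :
    y₀ ∈ LinearMap.range (π0 s : (Fin n → ℝ) →ₗ[ℝ] (Fin n → ℝ)) ↔
      ∃ C : ℝ, ∀ t : ℝ, Real.exp (-η * |t - s|) * ‖U t s y₀‖ ≤ C := by
  obtain ⟨C, -, hCm, hC0, hCp⟩ := htri η hη0
  simp only [neg_mul, Real.exp_neg_mul_le_iff]
  constructor
  · rintro ⟨x, rfl⟩
    refine ⟨C * ‖x‖, fun t => ?_⟩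
    calc ‖U t s (π0 s x)‖ = ‖(U t s).comp (π0 s) x‖ := rfl
      _ ≤ C * exp (η * |t - s|) * ‖x‖ := (ContinuousLinearMap.le_opNorm _ _).trans <|
          mul_le_mul_of_nonneg_right (hC0 t s) (norm_nonneg x)
      _ = C * ‖x‖ * exp (η * |t - s|) := by ring
  · rintro ⟨C', hgrowth⟩
    have hm : πm s y₀ = 0 :=
      apply_eq_zero_of_growth_lt_decay hcocycle hid (fun t => (hcomm t s).1) (β := -a)
        (by linarith) hgrowth fun u hu =>
          ⟨s - u, by simp [abs_of_nonneg hu], by simpa using hCm s (s - u) (by linarith)⟩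
    have hp : πp s y₀ = 0 :=
      apply_eq_zero_of_growth_lt_decay hcocycle hid (fun t => (hcomm t s).2.2) (β := b)
        hηb hgrowth fun u hu =>
          ⟨s + u, by simp [abs_of_nonneg hu], by simpa using hCp s (s + u) (by linarith)⟩
    refine ⟨y₀, ?_⟩
    simpa [hm, hp] using congrArg (· y₀) (hsum s)

/-- Characterization of the center subspace: under an exponential trichotomy with exponents
`a < 0 < b`, for `0 < η < min (-a) b` a vector `y₀` lies in `E₀(s) = ran (π₀ s)` iff the
solution `t ↦ U t s y₀` has weighted sup-norm `sup_t e^{-η|t-s|}‖U t s y₀‖ < ∞`. -/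
theorem stmt_6 {n : ℕ}
    (U : ℝ → ℝ → ((Fin n → ℝ) →L[ℝ] (Fin n → ℝ)))
    (πm π0 πp : ℝ → ((Fin n → ℝ) →L[ℝ] (Fin n → ℝ)))
    (hcocycle : ∀ t r s : ℝ, (U t r).comp (U r s) = U t s)
    (hid : ∀ s : ℝ, U s s = ContinuousLinearMap.id ℝ (Fin n → ℝ))
    (hsum : ∀ t : ℝ, πm t + π0 t + πp t = ContinuousLinearMap.id ℝ (Fin n → ℝ))
    (hidem : ∀ t : ℝ, (πm t).comp (πm t) = πm t ∧ (π0 t).comp (π0 t) = π0 t ∧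
      (πp t).comp (πp t) = πp t)
    (horth : ∀ t : ℝ, (πm t).comp (π0 t) = 0 ∧ (π0 t).comp (πp t) = 0 ∧
      (πp t).comp (πm t) = 0 ∧ (π0 t).comp (πm t) = 0 ∧ (πp t).comp (π0 t) = 0 ∧
      (πm t).comp (πp t) = 0)
    (hcomm : ∀ t s : ℝ, (U t s).comp (πm s) = (πm t).comp (U t s) ∧
      (U t s).comp (π0 s) = (π0 t).comp (U t s) ∧ (U t s).comp (πp s) = (πp t).comp (U t s))
    (N : ℝ) (hN : ∀ t : ℝ, ‖πm t‖ ≤ N ∧ ‖π0 t‖ ≤ N ∧ ‖πp t‖ ≤ N)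
    (a b : ℝ) (ha : a < 0) (hb : 0 < b)
    (htri : ∀ ε : ℝ, 0 < ε → ∃ C : ℝ, 0 < C ∧
      (∀ t s : ℝ, s ≤ t → ‖(U t s).comp (πm s)‖ ≤ C * Real.exp (a * (t - s))) ∧
      (∀ t s : ℝ, ‖(U t s).comp (π0 s)‖ ≤ C * Real.exp (ε * |t - s|)) ∧
      (∀ t s : ℝ, t ≤ s → ‖(U t s).comp (πp s)‖ ≤ C * Real.exp (b * (t - s))))
    (η : ℝ) (hη0 : 0 < η) (hηa : η < -a) (hηb : η < b)
    (s : ℝ) (y₀ : Fin n → ℝ) :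
    y₀ ∈ LinearMap.range (π0 s : (Fin n → ℝ) →ₗ[ℝ] (Fin n → ℝ)) ↔
      ∃ C : ℝ, ∀ t : ℝ, Real.exp (-η * |t - s|) * ‖U t s y₀‖ ≤ C :=
  stmt_6_general U πm π0 πp hcocycle hid hsum hcomm a b htri η hη0 hηa hηb s y₀
end

section
/- Under an exponential trichotomy, for f ∈ BC_s^η with 0 < η < min{−a,b}, the function u = K_s^η f is the unique solution in BC_s^η of the inhomogeneous equation u(t) = U(t,s)u(s) + ∫ₛᵗ U(t,τ)f(τ)dτ satisfying π₀(s)u(s) = 0. -/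
/-!
With `ε = η / 2` in the trichotomy, each of the three integrands of `K_s f` at time `t` is
bounded by `exp (η |t - s|)` times a kernel `exp (-δ |t - τ|)`, with `δ` one of `η / 2`, `b - η`,
`-a - η`; the kernel has integral `2 / δ` over `ℝ`, which gives the growth bound and the
integrability of the tails. Integrability lets the cocycle identity `U t s U s τ = U t τ` pass
through the integrals, and the variation-of-constants formula follows by splitting
`f = π₋ f + π₀ f + π₊ f`.

For uniqueness, the difference `w` of two solutions is an orbit `w t = U t s (w s)` growing at most
like `exp (η |t - s|)`. Since `π₊(s) = U s t π₊(t) U t s`, the dichotomy estimate on the unstable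
part gives `‖π₊(s) w(s)‖ ≲ exp (-(b - η) (t - s)) → 0` as `t → ∞`, and likewise `π₋(s) w(s) = 0`
using `t → -∞`; with `π₀(s) w(s) = 0` this forces `w = 0`.
-/

open MeasureTheory Set Filter Real Topology

section Estimates

variable {E : Type*} [NormedAddCommGroup E]

theorem integral_exp_neg_mul_abs {δ : ℝ} (hδ : 0 < δ) : ∫ x, exp (-(δ * |x|)) = 2 / δ := by
  have h := integral_comp_abs (f := fun x => exp (-(δ * x)))
  simp only [← neg_mul] at h ⊢
  rw [h, integral_exp_mul_Ioi (neg_neg_of_pos hδ), mul_zero, exp_zero, neg_div_neg_eq,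
    mul_one_div]

theorem integrable_exp_neg_mul_abs_sub {δ : ℝ} (hδ : 0 < δ) (t : ℝ) :
    Integrable fun τ => exp (-(δ * |t - τ|)) :=
  (Integrable.of_integral_ne_zero (by rw [integral_exp_neg_mul_abs hδ]; positivity)).comp_sub_left t

theorem integral_exp_neg_mul_abs_sub {δ : ℝ} (hδ : 0 < δ) (t : ℝ) :
    ∫ τ, exp (-(δ * |t - τ|)) = 2 / δ := by
  rw [integral_sub_left_eq_self (fun x => exp (-(δ * |x|))), integral_exp_neg_mul_abs hδ]

theorem exp_sub_mul_abs_sub_eq (K γ δ t τ : ℝ) :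
    K * exp (γ - δ * |t - τ|) = K * exp γ * exp (-(δ * |t - τ|)) := by
  rw [sub_eq_add_neg, exp_add, mul_assoc]

theorem integrableOn_of_norm_le_exp_abs_sub {g : ℝ → E} {S : Set ℝ} {K γ δ t : ℝ}
    (hδ : 0 < δ) (hS : MeasurableSet S) (hg : AEStronglyMeasurable g (volume.restrict S))
    (hbound : ∀ τ ∈ S, ‖g τ‖ ≤ K * exp (γ - δ * |t - τ|)) : IntegrableOn g S := by
  refine Integrable.mono'
    ((integrable_exp_neg_mul_abs_sub hδ t).const_mul (K * exp γ)).integrableOn hg ?_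
  filter_upwards [ae_restrict_mem hS] with τ hτ
  rw [← exp_sub_mul_abs_sub_eq]
  exact hbound τ hτ

theorem norm_setIntegral_le_of_norm_le_exp_abs_sub [NormedSpace ℝ E] {g : ℝ → E} {S : Set ℝ}
    {K γ δ t : ℝ} (hK : 0 ≤ K) (hδ : 0 < δ) (hS : MeasurableSet S)
    (hbound : ∀ τ ∈ S, ‖g τ‖ ≤ K * exp (γ - δ * |t - τ|)) :
    ‖∫ τ in S, g τ‖ ≤ K * exp γ * (2 / δ) := by
  have hint := (integrable_exp_neg_mul_abs_sub hδ t).const_mul (K * exp γ)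
  calc ‖∫ τ in S, g τ‖ ≤ ∫ τ in S, K * exp γ * exp (-(δ * |t - τ|)) := by
        refine norm_integral_le_of_norm_le hint.integrableOn ?_
        filter_upwards [ae_restrict_mem hS] with τ hτ
        rw [← exp_sub_mul_abs_sub_eq]
        exact hbound τ hτ
    _ ≤ ∫ τ, K * exp γ * exp (-(δ * |t - τ|)) :=
        setIntegral_le_integral hint (ae_of_all _ fun τ => by positivity)
    _ = K * exp γ * (2 / δ) := by rw [integral_const_mul, integral_exp_neg_mul_abs_sub hδ]

theorem norm_apply_le_mul_exp [NormedSpace ℝ E] {F : Type*} [NormedAddCommGroup F]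
    [NormedSpace ℝ F] {A : E →L[ℝ] F} {x : E} {C M α β γ : ℝ} (hA : ‖A‖ ≤ C * exp α)
    (hx : ‖x‖ ≤ M * exp β) (hγ : α + β ≤ γ) : ‖A x‖ ≤ C * M * exp γ := by
  have hC : 0 ≤ C := nonneg_of_mul_nonneg_left ((norm_nonneg A).trans hA) (exp_pos α)
  calc ‖A x‖ ≤ C * exp α * (M * exp β) :=
        (A.le_opNorm x).trans (mul_le_mul hA hx (norm_nonneg x) (mul_nonneg hC (exp_pos α).le))
    _ = C * M * exp (α + β) := by rw [exp_add]; ring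
    _ ≤ C * M * exp γ := by
        have hM : 0 ≤ M := nonneg_of_mul_nonneg_left ((norm_nonneg x).trans hx) (exp_pos β)
        gcongr

theorem exp_neg_mul_mul_le_iff {c x y K : ℝ} : exp (-c * x) * y ≤ K ↔ y ≤ K * exp (c * x) := by
  rw [neg_mul, exp_neg, inv_mul_le_iff₀ (exp_pos _), mul_comm]

theorem eq_zero_of_forall_norm_le_exp_neg {x : E} {c K : ℝ} (hc : 0 < c)
    (hx : ∀ T, 0 ≤ T → ‖x‖ ≤ K * exp (-(c * T))) : x = 0 := by
  have hlim : Tendsto (fun T => K * exp (-(c * T))) atTop (𝓝 0) := by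
    simpa using (tendsto_exp_neg_atTop_nhds_zero.comp (tendsto_id.const_mul_atTop hc)).const_mul K
  exact norm_le_zero_iff.1 (ge_of_tendsto hlim (eventually_atTop.2 ⟨0, hx⟩))

theorem abs_sub_add_abs_sub_of_mem_uIoc {s t τ : ℝ} (h : τ ∈ uIoc s t) :
    |t - τ| + |τ - s| = |t - s| := by
  rcases le_total s t with hst | hts
  · rw [uIoc_of_le hst] at h
    rw [abs_of_nonneg (by linarith [h.2]), abs_of_nonneg (by linarith [h.1]),
      abs_of_nonneg (by linarith)]
    ring
  · rw [uIoc_of_ge hts] at h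
    rw [abs_of_nonpos (by linarith [h.1]), abs_of_nonpos (by linarith [h.2]),
      abs_of_nonpos (by linarith)]
    ring

-- the growth condition of `BC_s^η`
def WeightedBounded (η s : ℝ) (g : ℝ → E) : Prop :=
  ∃ C : ℝ, ∀ t : ℝ, exp (-η * |t - s|) * ‖g t‖ ≤ C

theorem WeightedBounded.sub {η s : ℝ} {g h : ℝ → E} (hg : WeightedBounded η s g)
    (hh : WeightedBounded η s h) : WeightedBounded η s (g - h) := by
  obtain ⟨Cg, hCg⟩ := hg
  obtain ⟨Ch, hCh⟩ := hh
  refine ⟨Cg + Ch, fun t => ?_⟩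
  calc exp (-η * |t - s|) * ‖(g - h) t‖
      ≤ exp (-η * |t - s|) * ‖g t‖ + exp (-η * |t - s|) * ‖h t‖ := by
        rw [← mul_add]; exact mul_le_mul_of_nonneg_left (norm_sub_le _ _) (exp_pos _).le
    _ ≤ Cg + Ch := add_le_add (hCg t) (hCh t)

end Estimates

section Trichotomy

variable {E : Type*} [NormedAddCommGroup E] [NormedSpace ℝ E]
  {U : ℝ → ℝ → E →L[ℝ] E} {πm π0 πp : ℝ → E →L[ℝ] E} {f : ℝ → E} {a b C M η s : ℝ}

/-- The paper's `K_s^η f`; the unstable term is `∫_∞^t = -∫_t^∞`. -/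
noncomputable def trichotomyInverse (U : ℝ → ℝ → E →L[ℝ] E) (πm π0 πp : ℝ → E →L[ℝ] E) (s : ℝ)
    (f : ℝ → E) (t : ℝ) : E :=
  (∫ τ in s..t, U t τ (π0 τ (f τ))) - (∫ τ in Ici t, U t τ (πp τ (f τ)))
    + ∫ τ in Iic t, U t τ (πm τ (f τ))

theorem continuous_kernel {P : ℝ → E →L[ℝ] E} (hU : Continuous fun p : ℝ × ℝ => U p.1 p.2)
    (hP : Continuous P) (hf : Continuous f) (t : ℝ) : Continuous fun τ => U t τ (P τ (f τ)) :=
  (hU.comp (continuous_const.prodMk continuous_id)).clm_apply (hP.clm_apply hf)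

theorem norm_unstable_kernel_le
    (hp : ∀ t τ : ℝ, t ≤ τ → ‖(U t τ).comp (πp τ)‖ ≤ C * exp (b * (t - τ)))
    (hf : ∀ τ, ‖f τ‖ ≤ M * exp (η * |τ - s|)) (hη : 0 ≤ η) (t : ℝ) :
    ∀ τ ∈ Ici t, ‖U t τ (πp τ (f τ))‖ ≤ C * M * exp (η * |t - s| - (b - η) * |t - τ|) := by
  intro τ (hτ : t ≤ τ)
  refine norm_apply_le_mul_exp (A := (U t τ).comp (πp τ)) (hp t τ hτ) (hf τ) ?_
  have htri := mul_le_mul_of_nonneg_left (abs_sub_le τ t s) hη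
  rw [abs_of_nonneg (sub_nonneg.2 hτ)] at htri
  rw [abs_of_nonpos (sub_nonpos.2 hτ)]
  linarith

theorem norm_stable_kernel_le
    (hm : ∀ t τ : ℝ, τ ≤ t → ‖(U t τ).comp (πm τ)‖ ≤ C * exp (a * (t - τ)))
    (hf : ∀ τ, ‖f τ‖ ≤ M * exp (η * |τ - s|)) (hη : 0 ≤ η) (t : ℝ) :
    ∀ τ ∈ Iic t, ‖U t τ (πm τ (f τ))‖ ≤ C * M * exp (η * |t - s| - (-a - η) * |t - τ|) := by
  intro τ (hτ : τ ≤ t)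
  refine norm_apply_le_mul_exp (A := (U t τ).comp (πm τ)) (hm t τ hτ) (hf τ) ?_
  have htri := mul_le_mul_of_nonneg_left (abs_sub_le τ t s) hη
  rw [abs_of_nonpos (sub_nonpos.2 hτ)] at htri
  rw [abs_of_nonneg (sub_nonneg.2 hτ)]
  linarith

theorem norm_center_kernel_le {ε : ℝ}
    (h0 : ∀ t τ : ℝ, ‖(U t τ).comp (π0 τ)‖ ≤ C * exp (ε * |t - τ|))
    (hf : ∀ τ, ‖f τ‖ ≤ M * exp (η * |τ - s|)) (t : ℝ) :
    ∀ τ ∈ uIoc s t, ‖U t τ (π0 τ (f τ))‖ ≤ C * M * exp (η * |t - s| - (η - ε) * |t - τ|) := by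
  intro τ hτ
  refine norm_apply_le_mul_exp (A := (U t τ).comp (π0 τ)) (h0 t τ) (hf τ) ?_
  rw [← abs_sub_add_abs_sub_of_mem_uIoc hτ]
  linarith

theorem integrableOn_cocycle (hcocycle : ∀ t r s, (U t r).comp (U r s) = U t s) {g : ℝ → E}
    {S : Set ℝ} {r : ℝ} (hg : IntegrableOn (fun τ => U r τ (g τ)) S) (t : ℝ) :
    IntegrableOn (fun τ => U t τ (g τ)) S := by
  simpa only [IntegrableOn, ← ContinuousLinearMap.comp_apply, hcocycle] using
    (U t r).integrable_comp hg

theorem map_setIntegral_cocycle [CompleteSpace E]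
    (hcocycle : ∀ t r s, (U t r).comp (U r s) = U t s) {g : ℝ → E} {S : Set ℝ} {r : ℝ}
    (hg : IntegrableOn (fun τ => U r τ (g τ)) S) (t : ℝ) :
    U t r (∫ τ in S, U r τ (g τ)) = ∫ τ in S, U t τ (g τ) := by
  rw [← (U t r).integral_comp_comm hg]
  simp only [← ContinuousLinearMap.comp_apply, hcocycle]

theorem ContinuousLinearMap.apply_integral_eq_zero [CompleteSpace E] {F : Type*}
    [NormedAddCommGroup F] [NormedSpace ℝ F] [CompleteSpace F] {α : Type*} [MeasurableSpace α]
    {μ : Measure α} {L : E →L[ℝ] F} {g : α → E} (h : ∀ x, L (g x) = 0) : L (∫ x, g x ∂μ) = 0 := by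
  by_cases hg : Integrable g μ
  · rw [← L.integral_comp_comm hg]; simp [h]
  · rw [integral_undef hg, map_zero]

theorem center_proj_trichotomyInverse_self [CompleteSpace E]
    (hcomm : ∀ τ, (U s τ).comp (π0 τ) = (π0 s).comp (U s τ))
    (h0p : ∀ τ, (π0 τ).comp (πp τ) = 0) (h0m : ∀ τ, (π0 τ).comp (πm τ) = 0) :
    π0 s (trichotomyInverse U πm π0 πp s f s) = 0 := by
  have hvanish : ∀ P : ℝ → E →L[ℝ] E, (∀ τ, (π0 τ).comp (P τ) = 0) →
      ∀ S : Set ℝ, π0 s (∫ τ in S, U s τ (P τ (f τ))) = 0 := by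
    intro P hP S
    refine ContinuousLinearMap.apply_integral_eq_zero fun τ => ?_
    rw [← ContinuousLinearMap.comp_apply, ← hcomm, ContinuousLinearMap.comp_apply,
      ← ContinuousLinearMap.comp_apply (π0 τ), hP, zero_apply, map_zero]
  simp [trichotomyInverse, hvanish πp h0p, hvanish πm h0m]

theorem trichotomyInverse_eq_add_integral [CompleteSpace E]
    (hcocycle : ∀ t r s, (U t r).comp (U r s) = U t s)
    (hsum : ∀ t, πm t + π0 t + πp t = ContinuousLinearMap.id ℝ E)
    (hc0 : ∀ t, Continuous fun τ => U t τ (π0 τ (f τ)))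
    (hcp : ∀ t, Continuous fun τ => U t τ (πp τ (f τ)))
    (hcm : ∀ t, Continuous fun τ => U t τ (πm τ (f τ)))
    (hIp : ∀ t, IntegrableOn (fun τ => U t τ (πp τ (f τ))) (Ici t))
    (hIm : ∀ t, IntegrableOn (fun τ => U t τ (πm τ (f τ))) (Iic t)) (t : ℝ) :
    trichotomyInverse U πm π0 πp s f t =
      U t s (trichotomyInverse U πm π0 πp s f s) + ∫ τ in s..t, U t τ (f τ) := by
  have hsplit : ∫ τ in s..t, U t τ (f τ) = (∫ τ in s..t, U t τ (πm τ (f τ)))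
      + (∫ τ in s..t, U t τ (π0 τ (f τ))) + ∫ τ in s..t, U t τ (πp τ (f τ)) := by
    rw [← intervalIntegral.integral_add ((hcm t).intervalIntegrable s t)
        ((hc0 t).intervalIntegrable s t),
      ← intervalIntegral.integral_add (f := fun τ => U t τ (πm τ (f τ)) + U t τ (π0 τ (f τ)))
        (((hcm t).add (hc0 t)).intervalIntegrable s t) ((hcp t).intervalIntegrable s t)]
    refine intervalIntegral.integral_congr fun τ _ => ?_
    simp only [← map_add, ← add_apply, hsum, ContinuousLinearMap.id_apply]
  have hp : ∀ r, IntegrableOn (fun τ => U t τ (πp τ (f τ))) (Ici r) :=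
    fun r => integrableOn_cocycle hcocycle (hIp r) t
  have hm : ∀ r, IntegrableOn (fun τ => U t τ (πm τ (f τ))) (Iic r) :=
    fun r => integrableOn_cocycle hcocycle (hIm r) t
  simp only [trichotomyInverse, intervalIntegral.integral_same, map_add, map_sub, map_zero,
    map_setIntegral_cocycle hcocycle (hIp s), map_setIntegral_cocycle hcocycle (hIm s)]
  rw [hsplit, ← intervalIntegral.integral_Ici_sub_Ici' (hp s) (hp t),
    ← intervalIntegral.integral_Iic_sub_Iic (hm s) (hm t)]
  abel

theorem weightedBounded_trichotomyInverse {K δ0 δp δm : ℝ} (hK : 0 ≤ K) (hδ0 : 0 < δ0)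
    (hδp : 0 < δp) (hδm : 0 < δm)
    (h0 : ∀ t, ∀ τ ∈ uIoc s t, ‖U t τ (π0 τ (f τ))‖ ≤ K * exp (η * |t - s| - δ0 * |t - τ|))
    (hp : ∀ t, ∀ τ ∈ Ici t, ‖U t τ (πp τ (f τ))‖ ≤ K * exp (η * |t - s| - δp * |t - τ|))
    (hm : ∀ t, ∀ τ ∈ Iic t, ‖U t τ (πm τ (f τ))‖ ≤ K * exp (η * |t - s| - δm * |t - τ|)) :
    WeightedBounded η s (trichotomyInverse U πm π0 πp s f) := by
  refine ⟨K * (2 / δ0 + 2 / δp + 2 / δm), fun t => exp_neg_mul_mul_le_iff.2 ?_⟩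
  have i0 : ‖∫ τ in s..t, U t τ (π0 τ (f τ))‖ ≤ K * exp (η * |t - s|) * (2 / δ0) := by
    rw [intervalIntegral.norm_integral_eq_norm_integral_uIoc]
    exact norm_setIntegral_le_of_norm_le_exp_abs_sub hK hδ0 measurableSet_uIoc (h0 t)
  have ip := norm_setIntegral_le_of_norm_le_exp_abs_sub hK hδp measurableSet_Ici (hp t)
  have im := norm_setIntegral_le_of_norm_le_exp_abs_sub hK hδm measurableSet_Iic (hm t)
  have htri := norm_add_le_of_le (norm_sub_le_of_le i0 ip) im
  unfold trichotomyInverse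
  linarith

theorem proj_apply_eq_comp_apply (hcocycle : ∀ t r s, (U t r).comp (U r s) = U t s)
    (hid : U s s = ContinuousLinearMap.id ℝ E) {P : ℝ → E →L[ℝ] E} {t : ℝ}
    (hcomm : (U s t).comp (P t) = (P s).comp (U s t)) (x : E) :
    P s x = (U s t).comp (P t) (U t s x) := by
  rw [hcomm, ContinuousLinearMap.comp_apply, ← ContinuousLinearMap.comp_apply (U s t), hcocycle,
    hid, ContinuousLinearMap.id_apply]

theorem unstable_proj_eq_zero (hcocycle : ∀ t r s, (U t r).comp (U r s) = U t s)
    (hid : U s s = ContinuousLinearMap.id ℝ E)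
    (hcomm : ∀ t, (U s t).comp (πp t) = (πp s).comp (U s t))
    (hp : ∀ t τ : ℝ, t ≤ τ → ‖(U t τ).comp (πp τ)‖ ≤ C * exp (b * (t - τ))) (hηb : η < b)
    {x : E} {K : ℝ} (hx : ∀ t, ‖U t s x‖ ≤ K * exp (η * |t - s|)) : πp s x = 0 := by
  refine eq_zero_of_forall_norm_le_exp_neg (sub_pos.2 hηb) (K := C * K) fun T hT => ?_
  rw [proj_apply_eq_comp_apply hcocycle hid (hcomm (s + T))]
  refine norm_apply_le_mul_exp (hp s (s + T) (by linarith)) (hx (s + T)) ?_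
  rw [add_sub_cancel_left, abs_of_nonneg hT]
  linarith

theorem stable_proj_eq_zero (hcocycle : ∀ t r s, (U t r).comp (U r s) = U t s)
    (hid : U s s = ContinuousLinearMap.id ℝ E)
    (hcomm : ∀ t, (U s t).comp (πm t) = (πm s).comp (U s t))
    (hm : ∀ t τ : ℝ, τ ≤ t → ‖(U t τ).comp (πm τ)‖ ≤ C * exp (a * (t - τ))) (hηa : η < -a)
    {x : E} {K : ℝ} (hx : ∀ t, ‖U t s x‖ ≤ K * exp (η * |t - s|)) : πm s x = 0 := by
  refine eq_zero_of_forall_norm_le_exp_neg (by linarith : 0 < -a - η) (K := C * K)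
    fun T hT => ?_
  rw [proj_apply_eq_comp_apply hcocycle hid (hcomm (s - T))]
  refine norm_apply_le_mul_exp (hm s (s - T) (by linarith)) (hx (s - T)) ?_
  rw [sub_sub_cancel_left, abs_neg, abs_of_nonneg hT, sub_sub_cancel]
  linarith

theorem eq_zero_of_weightedBounded_orbit (hcocycle : ∀ t r s, (U t r).comp (U r s) = U t s)
    (hid : U s s = ContinuousLinearMap.id ℝ E)
    (hsum : πm s + π0 s + πp s = ContinuousLinearMap.id ℝ E)
    (hcommm : ∀ t, (U s t).comp (πm t) = (πm s).comp (U s t))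
    (hcommp : ∀ t, (U s t).comp (πp t) = (πp s).comp (U s t))
    (hm : ∀ t τ : ℝ, τ ≤ t → ‖(U t τ).comp (πm τ)‖ ≤ C * exp (a * (t - τ)))
    (hp : ∀ t τ : ℝ, t ≤ τ → ‖(U t τ).comp (πp τ)‖ ≤ C * exp (b * (t - τ)))
    (hηa : η < -a) (hηb : η < b) {x : E} (hx : WeightedBounded η s fun t => U t s x)
    (h0 : π0 s x = 0) : x = 0 := by
  obtain ⟨K, hK⟩ := hx
  have hx : ∀ t, ‖U t s x‖ ≤ K * exp (η * |t - s|) := fun t => exp_neg_mul_mul_le_iff.1 (hK t)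
  have hdecomp := DFunLike.congr_fun hsum x
  rwa [add_apply, add_apply, h0,
    stable_proj_eq_zero hcocycle hid hcommm hm hηa hx,
    unstable_proj_eq_zero hcocycle hid hcommp hp hηb hx, add_zero, add_zero, eq_comm] at hdecomp

end Trichotomy

theorem stmt_9_general {n : ℕ}
    (U : ℝ → ℝ → ((Fin n → ℝ) →L[ℝ] (Fin n → ℝ)))
    (πm π0 πp : ℝ → ((Fin n → ℝ) →L[ℝ] (Fin n → ℝ)))
    (hUcont : Continuous fun p : ℝ × ℝ => U p.1 p.2)
    (hπm : Continuous πm) (hπ0 : Continuous π0) (hπp : Continuous πp)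
    (hcocycle : ∀ t r s : ℝ, (U t r).comp (U r s) = U t s)
    (hid : ∀ s : ℝ, U s s = ContinuousLinearMap.id ℝ (Fin n → ℝ))
    (hsum : ∀ t : ℝ, πm t + π0 t + πp t = ContinuousLinearMap.id ℝ (Fin n → ℝ))
    (horth : ∀ t : ℝ, (πm t).comp (π0 t) = 0 ∧ (π0 t).comp (πp t) = 0 ∧
      (πp t).comp (πm t) = 0 ∧ (π0 t).comp (πm t) = 0 ∧ (πp t).comp (π0 t) = 0 ∧
      (πm t).comp (πp t) = 0)
    (hcomm : ∀ t s : ℝ, (U t s).comp (πm s) = (πm t).comp (U t s) ∧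
      (U t s).comp (π0 s) = (π0 t).comp (U t s) ∧ (U t s).comp (πp s) = (πp t).comp (U t s))
    (a b : ℝ)
    (htri : ∀ ε : ℝ, 0 < ε → ∃ C : ℝ, 0 < C ∧
      (∀ t s : ℝ, s ≤ t → ‖(U t s).comp (πm s)‖ ≤ C * Real.exp (a * (t - s))) ∧
      (∀ t s : ℝ, ‖(U t s).comp (π0 s)‖ ≤ C * Real.exp (ε * |t - s|)) ∧
      (∀ t s : ℝ, t ≤ s → ‖(U t s).comp (πp s)‖ ≤ C * Real.exp (b * (t - s))))
    (η : ℝ) (hη0 : 0 < η) (hηa : η < -a) (hηb : η < b)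
    (s : ℝ) (f : ℝ → (Fin n → ℝ)) (hf : Continuous f)
    (M : ℝ) (hfM : ∀ t : ℝ, Real.exp (-η * |t - s|) * ‖f t‖ ≤ M)
    (u : ℝ → (Fin n → ℝ))
    (hu : ∀ t : ℝ, u t = (∫ τ in s..t, U t τ (π0 τ (f τ)))
        - (∫ τ in Set.Ici t, U t τ (πp τ (f τ)))
        + ∫ τ in Set.Iic t, U t τ (πm τ (f τ))) :
    (∀ t : ℝ, u t = U t s (u s) + ∫ τ in s..t, U t τ (f τ)) ∧
    π0 s (u s) = 0 ∧
    (∃ C : ℝ, ∀ t : ℝ, Real.exp (-η * |t - s|) * ‖u t‖ ≤ C) ∧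
    (∀ v : ℝ → (Fin n → ℝ), Continuous v →
      (∃ C : ℝ, ∀ t : ℝ, Real.exp (-η * |t - s|) * ‖v t‖ ≤ C) →
      (∀ t : ℝ, v t = U t s (v s) + ∫ τ in s..t, U t τ (f τ)) →
      π0 s (v s) = 0 → v = u) := by
  obtain ⟨C, hC, hm, h0, hp⟩ := htri (η / 2) (half_pos hη0)
  have hfη : ∀ τ, ‖f τ‖ ≤ M * exp (η * |τ - s|) := fun τ => exp_neg_mul_mul_le_iff.1 (hfM τ)
  have hM : 0 ≤ M := (mul_nonneg (exp_pos _).le (norm_nonneg _)).trans (hfM s)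
  have hker := fun P (hP : Continuous P) t => continuous_kernel hUcont hP hf t
  have hIp := fun t => integrableOn_of_norm_le_exp_abs_sub (sub_pos.2 hηb) measurableSet_Ici
    (hker πp hπp t).aestronglyMeasurable (norm_unstable_kernel_le hp hfη hη0.le t)
  have hIm := fun t => integrableOn_of_norm_le_exp_abs_sub (by linarith : 0 < -a - η)
    measurableSet_Iic (hker πm hπm t).aestronglyMeasurable (norm_stable_kernel_le hm hfη hη0.le t)
  obtain rfl : u = trichotomyInverse U πm π0 πp s f := funext hu
  have heq := trichotomyInverse_eq_add_integral (s := s) hcocycle hsum (hker π0 hπ0) (hker πp hπp)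
    (hker πm hπm) hIp hIm
  have hπ0u := center_proj_trichotomyInverse_self (f := f) (fun τ => (hcomm s τ).2.1)
    (fun τ => (horth τ).2.1) (fun τ => (horth τ).2.2.2.1)
  have hbdd := weightedBounded_trichotomyInverse (mul_nonneg hC.le hM) (by linarith : 0 < η - η / 2)
    (sub_pos.2 hηb) (by linarith : 0 < -a - η) (norm_center_kernel_le h0 hfη)
    (norm_unstable_kernel_le hp hfη hη0.le) (norm_stable_kernel_le hm hfη hη0.le)
  refine ⟨heq, hπ0u, hbdd, fun v _ hvb hveq hv0 => ?_⟩
  have horbit : (fun t => U t s (v s - trichotomyInverse U πm π0 πp s f s)) =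
      v - trichotomyInverse U πm π0 πp s f := by
    funext t
    rw [Pi.sub_apply, hveq t, heq t, map_sub]
    abel
  have hw := eq_zero_of_weightedBounded_orbit hcocycle (hid s) (hsum s) (fun t => (hcomm s t).1)
    (fun t => (hcomm s t).2.2) hm hp hηa hηb (horbit ▸ WeightedBounded.sub hvb hbdd)
    (by rw [map_sub, hv0, hπ0u, sub_zero])
  funext t
  rw [← sub_eq_zero, ← Pi.sub_apply, ← horbit, hw]
  exact map_zero (U t s)

/-- `u = K_s^η f` is the unique solution in `BC_s^η` of the linear inhomogeneous equation
`u t = U t s (u s) + ∫_s^t U t τ (f τ) dτ` with vanishing `E₀(s)`-component `π₀ s (u s) = 0`. -/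
theorem stmt_9 {n : ℕ}
    (U : ℝ → ℝ → ((Fin n → ℝ) →L[ℝ] (Fin n → ℝ)))
    (πm π0 πp : ℝ → ((Fin n → ℝ) →L[ℝ] (Fin n → ℝ)))
    (hUcont : Continuous fun p : ℝ × ℝ => U p.1 p.2)
    (hπm : Continuous πm) (hπ0 : Continuous π0) (hπp : Continuous πp)
    (hcocycle : ∀ t r s : ℝ, (U t r).comp (U r s) = U t s)
    (hid : ∀ s : ℝ, U s s = ContinuousLinearMap.id ℝ (Fin n → ℝ))
    (hsum : ∀ t : ℝ, πm t + π0 t + πp t = ContinuousLinearMap.id ℝ (Fin n → ℝ))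
    (horth : ∀ t : ℝ, (πm t).comp (π0 t) = 0 ∧ (π0 t).comp (πp t) = 0 ∧
      (πp t).comp (πm t) = 0 ∧ (π0 t).comp (πm t) = 0 ∧ (πp t).comp (π0 t) = 0 ∧
      (πm t).comp (πp t) = 0)
    (hcomm : ∀ t s : ℝ, (U t s).comp (πm s) = (πm t).comp (U t s) ∧
      (U t s).comp (π0 s) = (π0 t).comp (U t s) ∧ (U t s).comp (πp s) = (πp t).comp (U t s))
    (N : ℝ) (hN : ∀ t : ℝ, ‖πm t‖ ≤ N ∧ ‖π0 t‖ ≤ N ∧ ‖πp t‖ ≤ N)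
    (a b : ℝ) (ha : a < 0) (hb : 0 < b)
    (htri : ∀ ε : ℝ, 0 < ε → ∃ C : ℝ, 0 < C ∧
      (∀ t s : ℝ, s ≤ t → ‖(U t s).comp (πm s)‖ ≤ C * Real.exp (a * (t - s))) ∧
      (∀ t s : ℝ, ‖(U t s).comp (π0 s)‖ ≤ C * Real.exp (ε * |t - s|)) ∧
      (∀ t s : ℝ, t ≤ s → ‖(U t s).comp (πp s)‖ ≤ C * Real.exp (b * (t - s))))
    (η : ℝ) (hη0 : 0 < η) (hηa : η < -a) (hηb : η < b)
    (s : ℝ) (f : ℝ → (Fin n → ℝ)) (hf : Continuous f)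
    (M : ℝ) (hfM : ∀ t : ℝ, Real.exp (-η * |t - s|) * ‖f t‖ ≤ M)
    (u : ℝ → (Fin n → ℝ))
    (hu : ∀ t : ℝ, u t = (∫ τ in s..t, U t τ (π0 τ (f τ)))
        - (∫ τ in Set.Ici t, U t τ (πp τ (f τ)))
        + ∫ τ in Set.Iic t, U t τ (πm τ (f τ))) :
    (∀ t : ℝ, u t = U t s (u s) + ∫ τ in s..t, U t τ (f τ)) ∧
    π0 s (u s) = 0 ∧
    (∃ C : ℝ, ∀ t : ℝ, Real.exp (-η * |t - s|) * ‖u t‖ ≤ C) ∧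
    (∀ v : ℝ → (Fin n → ℝ), Continuous v →
      (∃ C : ℝ, ∀ t : ℝ, Real.exp (-η * |t - s|) * ‖v t‖ ≤ C) →
      (∀ t : ℝ, v t = U t s (v s) + ∫ τ in s..t, U t τ (f τ)) →
      π0 s (v s) = 0 → v = u) :=
  stmt_9_general U πm π0 πp hUcont hπm hπ0 hπp hcocycle hid hsum horth hcomm a b htri η hη0 hηa hηb
    s f hf M hfM u hu
end

section
/- For the linear periodically driven system x' = −x², y' = −y + sin(t)x², the formal power series center manifold H(t,x) = Σ_{n≥2} a_n(t)xⁿ satisfying ∂H/∂t − x²∂H/∂x = −H + sin(t)x² has coefficients a_n(t) = ((n−1)!/2^{(n−1)/2}) sin(t − (n−1)π/4), obtained from a₂(t) = (sin t − cos t)/2 and the recurrence that a_n is the unique 2π-periodic solution of a_n' + a_n = (n−1)a_{n−1}. -/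
/-!
Write `a n t = c n * sin (t - (n - 1) π / 4)`. The operator `d/dt + 1` sends `C sin (t - θ)`
to `√2 C sin (t - (θ - π/4))`: it multiplies the amplitude by `√2` and shifts the phase back
by `π/4`. Since `√2 c (n + 1) = n c n`, `d/dt + 1` turns `a (n + 1)` into `n a n`; the same
formula at `n = 1` gives `a 1 = sin`, which covers the equation for `a 2`.
Uniqueness holds because the difference `d` of two periodic solutions satisfies `d' = -d`, so
`d t eᵗ` is constant, which is incompatible with periodicity unless `d = 0`.
-/

open Real Function

theorem Function.Periodic.eq_zero_of_hasDerivAt_neg {d : ℝ → ℝ} {T : ℝ} (hd : Periodic d T)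
    (hT : T ≠ 0) (hder : ∀ t, HasDerivAt d (-d t) t) : d = 0 := by
  have hconst : ∀ s t, d s * exp s = d t * exp t := by
    have hzero : ∀ t, HasDerivAt (fun t => d t * exp t) 0 t := fun t =>
      ((hder t).mul (hasDerivAt_exp t)).congr_deriv (by ring)
    exact is_const_of_deriv_eq_zero (fun t => (hzero t).differentiableAt) fun t => (hzero t).deriv
  funext t
  have hshift : d t * (exp (t + T) - exp t) = 0 := by
    rw [mul_sub, ← hd t, hconst (t + T) t, hd t, sub_self]
  have hexp : exp (t + T) - exp t ≠ 0 :=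
    sub_ne_zero.mpr fun h => hT (by simpa using exp_injective h)
  exact (mul_eq_zero.mp hshift).resolve_right hexp

theorem Function.Periodic.eq_of_hasDerivAt_sub_self {f g F : ℝ → ℝ} {T : ℝ} (hf : Periodic f T)
    (hg : Periodic g T) (hT : T ≠ 0) (hf' : ∀ t, HasDerivAt f (F t - f t) t)
    (hg' : ∀ t, HasDerivAt g (F t - g t) t) : f = g := by
  have hdiff : f - g = 0 := (hf.sub hg).eq_zero_of_hasDerivAt_neg hT fun t =>
    ((hf' t).sub (hg' t)).congr_deriv (by simp only [Pi.sub_apply]; ring)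
  exact sub_eq_zero.mp hdiff

theorem hasDerivAt_mul_sin_sub (C θ t : ℝ) :
    HasDerivAt (fun t => C * sin (t - θ))
      (√2 * C * sin (t - (θ - π / 4)) - C * sin (t - θ)) t := by
  have h : HasDerivAt (fun t => C * sin (t - θ)) (C * cos (t - θ)) t := by
    simpa using (((hasDerivAt_id' t).sub_const θ).sin).const_mul C
  refine h.congr_deriv ?_
  have hsqrt : √2 * √2 = 2 := Real.mul_self_sqrt zero_le_two
  rw [show t - (θ - π / 4) = t - θ + π / 4 by ring, sin_add, sin_pi_div_four, cos_pi_div_four]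
  linear_combination -C * (sin (t - θ) + cos (t - θ)) / 2 * hsqrt

noncomputable def centerAmplitude (n : ℕ) : ℝ :=
  ((n - 1).factorial : ℝ) / (2 : ℝ) ^ (((n : ℝ) - 1) / 2)

noncomputable def centerCoeff (n : ℕ) (t : ℝ) : ℝ :=
  centerAmplitude n * sin (t - ((n : ℝ) - 1) * π / 4)

theorem sqrt_two_mul_centerAmplitude_succ {m : ℕ} (hm : m ≠ 0) :
    √2 * centerAmplitude (m + 1) = m * centerAmplitude m := by
  have hpow : (2 : ℝ) ^ ((m : ℝ) / 2) = (2 : ℝ) ^ (((m : ℝ) - 1) / 2) * √2 := by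
    rw [sqrt_eq_rpow, ← rpow_add two_pos]
    ring_nf
  simp only [centerAmplitude, Nat.cast_succ, add_sub_cancel_right, Nat.add_sub_cancel]
  rw [hpow, ← Nat.mul_factorial_pred hm]
  push_cast
  field_simp

theorem centerCoeff_one : centerCoeff 1 = sin := by
  funext t
  simp [centerCoeff, centerAmplitude]

theorem centerCoeff_two (t : ℝ) : centerCoeff 2 t = (sin t - cos t) / 2 := by
  norm_num [centerCoeff, centerAmplitude, ← sqrt_eq_rpow, sin_sub, sin_pi_div_four,
    cos_pi_div_four]
  field_simp

theorem centerCoeff_periodic (n : ℕ) : Periodic (centerCoeff n) (2 * π) := fun t => by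
  simp only [centerCoeff, add_sub_right_comm t (2 * π), sin_add_two_pi]

theorem hasDerivAt_centerCoeff_succ {m : ℕ} (hm : m ≠ 0) (t : ℝ) :
    HasDerivAt (centerCoeff (m + 1)) (m * centerCoeff m t - centerCoeff (m + 1) t) t := by
  have h := hasDerivAt_mul_sin_sub (centerAmplitude (m + 1)) (m * π / 4) t
  rw [sqrt_two_mul_centerAmplitude_succ hm,
    show (m : ℝ) * π / 4 - π / 4 = (m - 1) * π / 4 by ring, mul_assoc] at h
  unfold centerCoeff
  simpa only [Nat.cast_succ, add_sub_cancel_right] using h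

open Real in
/-- The coefficients of the formal center manifold expansion of `x' = -x²`,
`y' = -y + sin t · x²`: `a n t = ((n-1)!/2^{(n-1)/2}) sin(t - (n-1)π/4)` satisfies
`a 2 t = (sin t - cos t)/2`, each `a n` is `2π`-periodic, `a 2` is the unique `2π`-periodic
solution of `a' + a = sin`, and for `n ≥ 3`, `a n` is the unique `2π`-periodic solution of
`a' + a = (n-1) a_{n-1}`. -/
theorem stmt_16
    (a : ℕ → ℝ → ℝ)
    (ha : ∀ n : ℕ, 2 ≤ n → ∀ t : ℝ,
      a n t = ((n - 1).factorial : ℝ) / (2 : ℝ) ^ (((n : ℝ) - 1) / 2) *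
        sin (t - ((n : ℝ) - 1) * π / 4)) :
    (∀ t : ℝ, a 2 t = (sin t - cos t) / 2) ∧
    (∀ n : ℕ, 2 ≤ n → ∀ t : ℝ, a n (t + 2 * π) = a n t) ∧
    (∀ t : ℝ, HasDerivAt (a 2) (sin t - a 2 t) t) ∧
    (∀ b : ℝ → ℝ, (∀ t : ℝ, HasDerivAt b (sin t - b t) t) →
      (∀ t : ℝ, b (t + 2 * π) = b t) → b = a 2) ∧
    (∀ n : ℕ, 3 ≤ n → (∀ t : ℝ, HasDerivAt (a n) (((n : ℝ) - 1) * a (n - 1) t - a n t) t) ∧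
      (∀ b : ℝ → ℝ, (∀ t : ℝ, HasDerivAt b (((n : ℝ) - 1) * a (n - 1) t - b t) t) →
        (∀ t : ℝ, b (t + 2 * π) = b t) → b = a n)) := by
  have ha' : ∀ n, 2 ≤ n → a n = centerCoeff n := fun n hn => funext (ha n hn)
  have hper : ∀ n, 2 ≤ n → Periodic (a n) (2 * π) := fun n hn =>
    ha' n hn ▸ centerCoeff_periodic n
  have h2π : 2 * π ≠ 0 := by positivity
  have hder2 : ∀ t, HasDerivAt (a 2) (sin t - a 2 t) t := fun t => by
    simpa [ha' 2 le_rfl, centerCoeff_one] using hasDerivAt_centerCoeff_succ one_ne_zero t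
  refine ⟨fun t => ha' 2 le_rfl ▸ centerCoeff_two t, hper, hder2,
    fun b hb hbp => Periodic.eq_of_hasDerivAt_sub_self hbp (hper 2 le_rfl) h2π hb hder2, ?_⟩
  intro n hn
  obtain ⟨m, rfl⟩ : ∃ m, n = m + 1 := ⟨n - 1, by omega⟩
  have hder : ∀ t, HasDerivAt (a (m + 1))
      ((((m + 1 : ℕ) : ℝ) - 1) * a (m + 1 - 1) t - a (m + 1) t) t := fun t => by
    simpa [ha' (m + 1) (by omega), ha' m (by omega)] using
      hasDerivAt_centerCoeff_succ (m := m) (by omega) t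
  exact ⟨hder, fun b hb hbp =>
    Periodic.eq_of_hasDerivAt_sub_self hbp (hper (m + 1) (by omega)) h2π hb hder⟩
end

section
/- The power series Σ_{n≥2} a_n(t)xⁿ with a_n(t) = ((n−1)!/2^{(n−1)/2}) sin(t − (n−1)π/4) has radius of convergence zero in x for every fixed t ∈ ℝ; in particular limsup_{n→∞} |a_n(t)|^{1/n} = ∞. -/
open Real Filter Topology ENNReal

private lemma aux_half (θ : ℝ) : 1/2 ≤ |Real.sin θ| ∨ 1/2 ≤ |Real.sin (θ - π/2)| := by
  rw [Real.sin_sub_pi_div_two, abs_neg]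
  by_contra h
  push_neg at h
  obtain ⟨h1, h2⟩ := h
  nlinarith [Real.sin_sq_add_cos_sq θ, sq_abs (Real.sin θ), sq_abs (Real.cos θ),
    abs_nonneg (Real.sin θ), abs_nonneg (Real.cos θ)]

private lemma aux_growth (c : ℝ) : ∀ᶠ k : ℕ in atTop, 4 * c ^ (k+1) ≤ (k.factorial : ℝ) := by
  have h0 : Filter.Tendsto (fun k : ℕ => 4 * c ^ (k+1) / (k.factorial : ℝ)) atTop (𝓝 0) := by
    have h1 := (FloorSemiring.tendsto_pow_div_factorial_atTop (K := ℝ) c).const_mul (4*c)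
    rw [mul_zero] at h1
    refine h1.congr fun k => ?_
    ring
  filter_upwards [h0.eventually_lt_const (by norm_num : (0:ℝ) < 1)] with k hk
  have hf : (0:ℝ) < (k.factorial : ℝ) := by positivity
  rw [div_lt_iff₀ hf] at hk
  linarith

private lemma aux_freq (t : ℝ) (N : ℕ) :
    ∃ m : ℕ, N ≤ m ∧ 2 ≤ m ∧ 1/2 ≤ |Real.sin (t - ((m:ℝ) - 1) * π / 4)| := by
  set k := max N 2 with hk
  have hkN : N ≤ k := le_max_left _ _
  have hk2 : 2 ≤ k := le_max_right _ _
  rcases aux_half (t - ((k:ℝ) - 1) * π / 4) with h | h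
  · exact ⟨k, hkN, hk2, h⟩
  · refine ⟨k + 2, by omega, by omega, ?_⟩
    have he : t - (((k+2 : ℕ):ℝ) - 1) * π / 4 = (t - ((k:ℝ) - 1) * π / 4) - π/2 := by
      push_cast; ring
    rw [he]; exact h

private lemma aux_lb (a : ℕ → ℝ → ℝ)
    (ha : ∀ n : ℕ, 2 ≤ n → ∀ t : ℝ,
      a n t = ((n - 1).factorial : ℝ) / (2 : ℝ) ^ (((n : ℝ) - 1) / 2) *
        Real.sin (t - ((n : ℝ) - 1) * π / 4))
    (t : ℝ) (m : ℕ) (hm : 2 ≤ m)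
    (hsin : 1/2 ≤ |Real.sin (t - ((m:ℝ) - 1) * π / 4)|) :
    ((m - 1).factorial : ℝ) / 2 ^ (m + 1) ≤ |a m t| := by
  rw [ha m hm t, abs_mul]
  have hfp : (0:ℝ) < ((m - 1).factorial : ℝ) := by positivity
  have hrp : (0:ℝ) < (2:ℝ) ^ (((m:ℝ) - 1) / 2) := Real.rpow_pos_of_pos two_pos _
  rw [abs_of_pos (div_pos hfp hrp)]
  have h2 : (2:ℝ) ^ (((m:ℝ) - 1) / 2) ≤ (2:ℝ) ^ (m : ℕ) := by
    rw [← Real.rpow_natCast 2 m]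
    apply Real.rpow_le_rpow_of_exponent_le one_le_two
    have h0 : (0:ℝ) ≤ (m:ℝ) := Nat.cast_nonneg m
    linarith
  calc ((m - 1).factorial : ℝ) / 2 ^ (m + 1)
      = (((m - 1).factorial : ℝ) / 2 ^ (m : ℕ)) * (1/2) := by rw [pow_succ]; ring
    _ ≤ (((m - 1).factorial : ℝ) / (2:ℝ) ^ (((m:ℝ) - 1) / 2)) * (1/2) := by gcongr
    _ ≤ (((m - 1).factorial : ℝ) / (2:ℝ) ^ (((m:ℝ) - 1) / 2)) *
          |Real.sin (t - ((m:ℝ) - 1) * π / 4)| := by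
        gcongr

open Real in
/-- The power series `Σ_{n≥2} a_n(t) xⁿ` with
`a n t = ((n-1)!/2^{(n-1)/2}) sin(t - (n-1)π/4)` has radius of convergence zero for every
fixed `t`: `limsup |a n t|^{1/n} = ∞` and the series diverges for every `x ≠ 0`. -/
theorem stmt_17
    (a : ℕ → ℝ → ℝ)
    (ha : ∀ n : ℕ, 2 ≤ n → ∀ t : ℝ,
      a n t = ((n - 1).factorial : ℝ) / (2 : ℝ) ^ (((n : ℝ) - 1) / 2) *
        sin (t - ((n : ℝ) - 1) * π / 4)) :
    ∀ t : ℝ,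
      (Filter.limsup (fun n : ℕ => ENNReal.ofReal (|a n t| ^ (1 / (n : ℝ))))
        Filter.atTop = ⊤) ∧
      ∀ x : ℝ, x ≠ 0 → ¬ Summable (fun n : ℕ => a (n + 2) t * x ^ (n + 2)) := by
  intro t
  constructor
  · -- limsup = ⊤
    by_contra hne
    set u : ℕ → ℝ≥0∞ := fun n : ℕ => ENNReal.ofReal (|a n t| ^ (1 / (n : ℝ))) with hu
    set L := Filter.limsup u Filter.atTop with hL
    have hB : L < L + 1 := ENNReal.lt_add_right hne one_ne_zero
    have hev := Filter.eventually_lt_of_limsup_lt hB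
    rw [Filter.eventually_atTop] at hev
    obtain ⟨N₁, hN₁⟩ := hev
    have hBtop : L + 1 ≠ ⊤ := ENNReal.add_ne_top.mpr ⟨hne, ENNReal.one_ne_top⟩
    set M : ℝ := (L + 1).toReal + 1 with hM
    have hM0 : 0 ≤ M := by positivity
    obtain ⟨N₂, hN₂⟩ := Filter.eventually_atTop.mp (aux_growth (2 * M))
    obtain ⟨m, hmN, hm2, hmsin⟩ := aux_freq t (max N₁ (N₂ + 1))
    have hlb := aux_lb a ha t m hm2 hmsin
    have hg : 4 * (2 * M) ^ ((m - 1) + 1) ≤ ((m - 1).factorial : ℝ) :=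
      hN₂ (m - 1) (by omega)
    have hm1 : m - 1 + 1 = m := by omega
    rw [hm1] at hg
    -- M ^ m ≤ |a m t|
    have hpow : M ^ m ≤ |a m t| := by
      refine le_trans ?_ hlb
      rw [le_div_iff₀ (by positivity : (0:ℝ) < (2:ℝ) ^ (m + 1))]
      have h2m : (2 * M) ^ m = 2 ^ m * M ^ m := mul_pow 2 M m
      have hnn : (0:ℝ) ≤ 2 ^ m * M ^ m := by positivity
      rw [h2m] at hg
      calc M ^ m * 2 ^ (m + 1) = 2 * (2 ^ m * M ^ m) := by ring
        _ ≤ 4 * (2 ^ m * M ^ m) := by linarith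
        _ ≤ ((m - 1).factorial : ℝ) := hg
    have hroot : M ≤ |a m t| ^ (1 / (m : ℝ)) := by
      have hx := Real.rpow_le_rpow (pow_nonneg hM0 m) hpow
        (by positivity : (0:ℝ) ≤ 1 / (m:ℝ))
      have hmne : (m:ℝ) ≠ 0 := by positivity
      rwa [← Real.rpow_natCast M m, ← Real.rpow_mul hM0, mul_one_div,
        div_self hmne, Real.rpow_one] at hx
    have hle : L + 1 ≤ u m := by
      have h1 : L + 1 = ENNReal.ofReal ((L+1).toReal) := (ENNReal.ofReal_toReal hBtop).symm
      rw [h1]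
      refine le_trans (ENNReal.ofReal_le_ofReal ?_) (ENNReal.ofReal_le_ofReal hroot)
      simp [hM]
    exact absurd (hN₁ m (le_trans (le_max_left _ _) hmN)) (not_lt.mpr hle)
  · intro x hx hsum
    have htend := hsum.tendsto_atTop_zero
    have habs : Filter.Tendsto (fun n : ℕ => |a (n + 2) t * x ^ (n + 2)|)
        Filter.atTop (𝓝 0) := by simpa using htend.abs
    obtain ⟨N₁, hN₁⟩ := Filter.eventually_atTop.mp
      (habs.eventually_lt_const (by norm_num : (0:ℝ) < 2))
    have hxpos : (0:ℝ) < |x| := abs_pos.mpr hx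
    obtain ⟨N₂, hN₂⟩ := Filter.eventually_atTop.mp (aux_growth (2 / |x|))
    obtain ⟨m, hmN, hm2, hmsin⟩ := aux_freq t (max (N₁ + 2) (N₂ + 1))
    set n := m - 2 with hn
    have hmn : m = n + 2 := by omega
    have hlb := aux_lb a ha t m hm2 hmsin
    rw [hmn] at hlb
    have hg : 4 * (2 / |x|) ^ ((n + 1) + 1) ≤ ((n + 1).factorial : ℝ) :=
      hN₂ (n + 1) (by omega)
    have hfact : ((n + 2 - 1).factorial : ℝ) = ((n + 1).factorial : ℝ) := by norm_num
    rw [hfact] at hlb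
    have hcon := hN₁ n (by omega)
    rw [abs_mul, abs_pow] at hcon
    -- now derive 2 ≤ |a (n+2) t| * |x|^(n+2)
    have key : 4 * ((2 / |x|) ^ (n + 2)) * |x| ^ (n + 2) = 2 * 2 ^ (n + 3) := by
      rw [div_pow]
      field_simp
      ring
    have hP : (0:ℝ) < |x| ^ (n + 2) := pow_pos hxpos _
    have hQ : (0:ℝ) < (2:ℝ) ^ (n + 3) := by positivity
    have hlb' : ((n + 1).factorial : ℝ) ≤ |a (n + 2) t| * 2 ^ (n + 2 + 1) := by
      rwa [div_le_iff₀ hQ] at hlb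
    have h1 : 4 * ((2 / |x|) ^ (n + 2)) * |x| ^ (n + 2) ≤
        ((n + 1).factorial : ℝ) * |x| ^ (n + 2) := by
      have := mul_le_mul_of_nonneg_right hg (le_of_lt hP)
      simpa using this
    have h2 : ((n + 1).factorial : ℝ) * |x| ^ (n + 2) ≤
        |a (n + 2) t| * 2 ^ (n + 3) * |x| ^ (n + 2) := by
      have := mul_le_mul_of_nonneg_right hlb' (le_of_lt hP)
      simpa [pow_succ] using this
    have h3 : |a (n + 2) t| * |x| ^ (n + 2) * 2 ^ (n + 3) < 2 * 2 ^ (n + 3) :=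
      mul_lt_mul_of_pos_right hcon hQ
    nlinarith [h1, h2, h3, key]
end
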